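/- Let G be a connected submodular hypergraph, and for x ∈ ℝ^N and p ≥ 1 define μ_p^+(x) = Σ_{v : x_v > 0} μ_v |x_v|^{p−1}, μ⁰(x) = Σ_{v : x_v = 0} μ_v, and μ_p^−(x) = Σ_{v : x_v < 0} μ_v |x_v|^{p−1}. Then for any nonconstant eigenvector x of △_p: if p > 1 then μ_p^+(x) − μ_p^−(x) = 0, and if p = 1 then |μ₁^+(x) − μ₁^−(x)| ≤ μ⁰(x). Consequently, for every p ≥ 1, the value c = 0 minimizes c ↦ ‖x − c·𝟙‖_{ℓp,μ}^p over ℝ. -/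

import Mathlib

open scoped BigOperators
open Finset

noncomputable section

/-- A set function on the ground set `Fin N` is submodular:
`F(S ∪ T) + F(S ∩ T) ≤ F(S) + F(T)` for all `S, T`. -/
def Submodular {N : ℕ} (F : Finset (Fin N) → ℝ) : Prop :=
  ∀ S T : Finset (Fin N), F (S ∪ T) + F (S ∩ T) ≤ F S + F T

/-- The Lovász extension of a set function, written in its (tie-breaking independent)
level-set integral form, which agrees with the usual sorted-sum definition
`f(x) = Σ_{j=1}^{N-1} F({i_1,…,i_j})(x_{i_j} − x_{i_{j+1}})` for a nonincreasing
ordering `x_{i_1} ≥ … ≥ x_{i_N}`. -/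
def lovasz {N : ℕ} (F : Finset (Fin N) → ℝ) (x : Fin N → ℝ) : ℝ :=
  ∫ t in (⨅ v, x v)..(⨆ v, x v), F (Finset.univ.filter fun v => t < x v)

/-- The inner product `⟨y, x⟩ = Σ_v y_v x_v`. -/
def dotp {N : ℕ} (y x : Fin N → ℝ) : ℝ := ∑ v, y v * x v

/-- The set of subgradients of `f : ℝ^N → ℝ` at `x`. -/
def subgradients {N : ℕ} (f : (Fin N → ℝ) → ℝ) (x : Fin N → ℝ) : Set (Fin N → ℝ) :=
  {y | ∀ x', dotp y (x' - x) ≤ f x' - f x}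

/-- The base polytope of a set function: `y(S) ≤ F(S)` for all `S ⊆ V` and `y(V) = 0`. -/
def basePolytope {N : ℕ} (F : Finset (Fin N) → ℝ) : Set (Fin N → ℝ) :=
  {y | (∀ S : Finset (Fin N), ∑ v ∈ S, y v ≤ F S) ∧ ∑ v, y v = 0}

/-- The sign function (`sgn 0 = 0`). -/
def sgn (a : ℝ) : ℝ := if 0 < a then 1 else if a < 0 then -1 else 0

/-- A vector is nonconstant. -/
def Nonconstant {N : ℕ} (x : Fin N → ℝ) : Prop := ∃ u v, x u ≠ x v

/-- Restriction of a vector to a subset of vertices (zero outside that subset). -/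
def restrictVec {N : ℕ} (x : Fin N → ℝ) (C : Finset (Fin N)) : Fin N → ℝ :=
  fun v => if v ∈ C then x v else 0

/-- Euclidean norm on `ℝ^N`. -/
def l2norm {N : ℕ} (z : Fin N → ℝ) : ℝ := Real.sqrt (∑ v, z v ^ 2)

/-- Supremum norm on `ℝ^N`. -/
def linfNorm {N : ℕ} (z : Fin N → ℝ) : ℝ := ⨆ v, |z v|

/-- A submodular hypergraph `G = (V, E, w, μ)` on `V = Fin N`: hyperedges `E`,
positive vertex weights `μ`, and for each hyperedge `e ∈ E` a scalar `θ_e > 0`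
together with a normalized symmetric submodular weight `w_e : 2^e → [0,1]`
(extended to all of `2^V` by `w_e(S) = w_e(S ∩ e)`). -/
structure SubmodularHypergraph (N : ℕ) where
  E : Finset (Finset (Fin N))
  μ : Fin N → ℝ
  μ_pos : ∀ v, 0 < μ v
  θ : Finset (Fin N) → ℝ
  θ_pos : ∀ e ∈ E, 0 < θ e
  w : Finset (Fin N) → Finset (Fin N) → ℝ
  w_inter : ∀ e ∈ E, ∀ S, w e S = w e (S ∩ e)
  w_submodular : ∀ e ∈ E, Submodular (w e)
  w_nonneg : ∀ e ∈ E, ∀ S, 0 ≤ w e S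
  w_le_one : ∀ e ∈ E, ∀ S, w e S ≤ 1
  w_empty : ∀ e ∈ E, w e ∅ = 0
  w_normalized : ∀ e ∈ E, ∃ S ⊆ e, w e S = 1
  w_symm : ∀ e ∈ E, ∀ S ⊆ e, w e S = w e (e \ S)

namespace SubmodularHypergraph

variable {N : ℕ} (G : SubmodularHypergraph N)

/-- `vol(S) = Σ_{v ∈ S} μ_v`. -/
def vol (S : Finset (Fin N)) : ℝ := ∑ v ∈ S, G.μ v

/-- `vol(∂S) = Σ_{e ∈ E} θ_e w_e(S)`. -/
def volB (S : Finset (Fin N)) : ℝ := ∑ e ∈ G.E, G.θ e * G.w e S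

/-- The Lovász extension `f_e` of the hyperedge weight `w_e`. -/
def fe (e : Finset (Fin N)) (x : Fin N → ℝ) : ℝ := lovasz (G.w e) x

/-- `Q_p(x) = Σ_{e ∈ E} θ_e f_e(x)^p`. -/
def Q (p : ℝ) (x : Fin N → ℝ) : ℝ := ∑ e ∈ G.E, G.θ e * G.fe e x ^ p

/-- `‖x‖_{ℓp,μ}^p = Σ_v μ_v |x_v|^p`. -/
def normLpPow (p : ℝ) (x : Fin N → ℝ) : ℝ := ∑ v, G.μ v * |x v| ^ p

/-- `G` is connected: `vol(∂S) > 0` for all nonempty proper `S ⊂ V`. -/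
def Connected : Prop :=
  ∀ S : Finset (Fin N), S.Nonempty → S ≠ Finset.univ → 0 < G.volB S

/-- Vertices `u, v` are connected in `G`: every `S` with `u ∈ S`, `v ∉ S` has
`vol(∂S) > 0`. -/
def VertConnected (u v : Fin N) : Prop :=
  ∀ S : Finset (Fin N), u ∈ S → v ∉ S → 0 < G.volB S

/-- The conductance `c(S) = vol(∂S) / min{vol(S), vol(V∖S)}`. -/
def conductance (S : Finset (Fin N)) : ℝ := G.volB S / min (G.vol S) (G.vol Sᶜ)

/-- The degree `d_v = Σ_{e ∈ E : v ∈ e} θ_e`. -/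
def degree (v : Fin N) : ℝ := ∑ e ∈ G.E.filter (fun e => v ∈ e), G.θ e

/-- `τ = max_v d_v / μ_v`. -/
def tau : ℝ := ⨆ v, G.degree v / G.μ v

/-- `G` is homogeneous: `w_e(S) = 1` for every `S ∈ 2^e ∖ {∅, e}`. -/
def Homogeneous : Prop :=
  ∀ e ∈ G.E, ∀ S ⊆ e, S ≠ ∅ → S ≠ e → G.w e S = 1

/-- `(λ, x)` is an eigenpair of the `p`-Laplacian `△_p` (for `p > 1` and for `p = 1`). -/
def IsEigenpair (p lam : ℝ) (x : Fin N → ℝ) : Prop :=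
  x ≠ 0 ∧
  ∃ y : Finset (Fin N) → Fin N → ℝ,
    (∀ e ∈ G.E, y e ∈ basePolytope (G.w e) ∧
        ∀ z ∈ basePolytope (G.w e), dotp z x ≤ dotp (y e) x) ∧
    (if 1 < p then
        ∀ v, ∑ e ∈ G.E, G.θ e * G.fe e x ^ (p - 1) * y e v
              = lam * G.μ v * (|x v| ^ (p - 1) * sgn (x v))
      else
        (∀ v, x v ≠ 0 → ∑ e ∈ G.E, G.θ e * y e v = lam * G.μ v * sgn (x v)) ∧
        (∀ v, x v = 0 → |∑ e ∈ G.E, G.θ e * y e v| ≤ lam * G.μ v))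

/-- Vertices `u, v` are connected inside the induced sub-hypergraph `G[W]`
(the boundary volume in `G[W]` of `S ⊆ W` equals `Σ_{e ∈ E} θ_e w_e(S)`). -/
def VertConnectedIn (W : Finset (Fin N)) (u v : Fin N) : Prop :=
  u = v ∨ ∀ S ⊆ W, u ∈ S → v ∉ S → 0 < G.volB S

/-- `C` is (the vertex set of) a connected component of the induced sub-hypergraph `G[W]`. -/
def IsComponent (W C : Finset (Fin N)) : Prop :=
  C ⊆ W ∧ C.Nonempty ∧
    (∀ u ∈ C, ∀ v ∈ C, G.VertConnectedIn W u v) ∧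
    (∀ u ∈ C, ∀ v ∈ W, G.VertConnectedIn W u v → v ∈ C)

end SubmodularHypergraph

def posSupp {N : ℕ} (x : Fin N → ℝ) : Finset (Fin N) := Finset.univ.filter fun v => 0 < x v
def negSupp {N : ℕ} (x : Fin N → ℝ) : Finset (Fin N) := Finset.univ.filter fun v => x v < 0
def nonnegSupp {N : ℕ} (x : Fin N → ℝ) : Finset (Fin N) := Finset.univ.filter fun v => 0 ≤ x v
def nonposSupp {N : ℕ} (x : Fin N → ℝ) : Finset (Fin N) := Finset.univ.filter fun v => x v ≤ 0

namespace SubmodularHypergraph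

variable {N : ℕ} (G : SubmodularHypergraph N)

/-- The number of strong nodal domains of `x` (positive ones plus negative ones). -/
def strongNodalCount (x : Fin N → ℝ) : ℕ :=
  {C : Finset (Fin N) | G.IsComponent (posSupp x) C}.ncard +
  {C : Finset (Fin N) | G.IsComponent (negSupp x) C}.ncard

/-- The number of weak nodal domains of `x` (positive ones plus negative ones). -/
def weakNodalCount (x : Fin N → ℝ) : ℕ :=
  {C : Finset (Fin N) | G.IsComponent (nonnegSupp x) C}.ncard +
  {C : Finset (Fin N) | G.IsComponent (nonposSupp x) C}.ncard

/-- The collection of strong nodal domains of `x`. -/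
def strongNodalDomains (x : Fin N → ℝ) : Set (Finset (Fin N)) :=
  {C | G.IsComponent (posSupp x) C ∨ G.IsComponent (negSupp x) C}

/-- The collection of weak nodal domains of `x`. -/
def weakNodalDomains (x : Fin N → ℝ) : Set (Finset (Fin N)) :=
  {C | G.IsComponent (nonnegSupp x) C ∨ G.IsComponent (nonposSupp x) C}

/-- `Z_{p,μ}(x) = min_c ‖x − c·𝟙‖_{ℓp,μ}^p`. -/
def Z (p : ℝ) (x : Fin N → ℝ) : ℝ := ⨅ c : ℝ, ∑ v, G.μ v * |x v - c| ^ p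

/-- `𝓡_p(x) = Q_p(x) / Z_{p,μ}(x)`. -/
def Rq (p : ℝ) (x : Fin N → ℝ) : ℝ := G.Q p x / G.Z p x

/-- The `k`-way Cheeger constant `h_k`. -/
def cheegerConst (k : ℕ) : ℝ :=
  sInf {c : ℝ | ∃ S : Fin k → Finset (Fin N),
    (∀ i, (S i).Nonempty) ∧ (∀ i j, i ≠ j → Disjoint (S i) (S j)) ∧
    c = ⨆ i, G.conductance (S i)}

end SubmodularHypergraph

/-- There is an odd continuous map `h : A → ℝ^k ∖ {0}`. -/
def genusLE {N : ℕ} (A : Set (Fin N → ℝ)) (k : ℕ) : Prop :=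
  ∃ h : (Fin N → ℝ) → (Fin k → ℝ),
    ContinuousOn h A ∧ (∀ x ∈ A, h (-x) = -h x) ∧ ∀ x ∈ A, h x ≠ 0

/-- The Krasnoselski genus of a set. -/
def genus {N : ℕ} (A : Set (Fin N → ℝ)) : ℕ∞ :=
  sInf ((fun n : ℕ => (n : ℕ∞)) '' {n | genusLE A n})

namespace SubmodularHypergraph

variable {N : ℕ} (G : SubmodularHypergraph N)

/-- The `k`-th variational eigenvalue `λ_k^{(p)}` of `△_p`:
`min` over closed symmetric `A ⊆ S_{p,μ}` with `γ(A) ≥ k` of `max_{x ∈ A} Q_p(x)`. -/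
def varEigen (p : ℝ) (k : ℕ) : ℝ :=
  sInf ((fun A : Set (Fin N → ℝ) => sSup (G.Q p '' A)) ''
    {A | IsClosed A ∧ (∀ x ∈ A, -x ∈ A) ∧
         A ⊆ {x | G.normLpPow p x = 1} ∧ (k : ℕ∞) ≤ genus A})

end SubmodularHypergraph

/-!
Summing the eigenvalue equation over all vertices kills its left side, because every `y_e` lies
in a base polytope and so has total mass `w_e(V) = 0`; on the right this leaves
`λ (μ_p^+(x) − μ_p^−(x))` plus the contribution of the zeros of `x`, which vanishes for `p > 1`
and is bounded by `λ μ⁰(x)` for `p = 1`. So everything rests on `λ > 0`. Pairing the equation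
with `x` gives `λ ‖x‖^p = Σ_e θ_e f_e(x)^{p−1} ⟨y_e, x⟩`, and `⟨y_e, x⟩ ≥ f_e(x) ≥ 0` since
Edmonds' greedy vector is a point of `B_e` at which `⟨·, x⟩ = f_e(x)`. Connectivity gives a
hyperedge cut by the top level set of `x`, whence `f_e(x) > 0` there. Finally the balance
condition is the first-order condition for `c ↦ ‖x − c 𝟙‖^p` at `c = 0`, and convexity of `|·|^p`
makes it a global minimum.
-/

open MeasureTheory

section Scalar

open Real

lemma sgn_mul_self (t : ℝ) : sgn t * t = |t| := by
  unfold sgn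
  split_ifs with h₁ h₂
  · rw [one_mul, abs_of_pos h₁]
  · rw [neg_one_mul, abs_of_neg h₂]
  · rw [le_antisymm (not_lt.mp h₁) (not_lt.mp h₂), zero_mul, abs_zero]

lemma sgn_mul_le_abs (t s : ℝ) : sgn t * s ≤ |s| := by
  unfold sgn
  split_ifs
  · rw [one_mul]; exact le_abs_self s
  · rw [neg_one_mul]; exact neg_le_abs s
  · rw [zero_mul]; exact abs_nonneg s

lemma sum_mul_sgn {N : ℕ} (g x : Fin N → ℝ) :
    ∑ v, g v * sgn (x v) = ∑ v ∈ posSupp x, g v - ∑ v ∈ negSupp x, g v := by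
  simp only [posSupp, negSupp, sum_filter, ← sum_sub_distrib]
  refine sum_congr rfl fun v _ => ?_
  unfold sgn
  split_ifs <;> first | (exfalso; linarith) | ring

lemma rpow_add_mul_sub_le {p τ u : ℝ} (hp : 1 ≤ p) (hτ : 0 < τ) (hu : 0 ≤ u) :
    τ ^ p + p * τ ^ (p - 1) * (u - τ) ≤ u ^ p := by
  have hB := one_add_mul_self_le_rpow_one_add (s := u / τ - 1)
    (by linarith [div_nonneg hu hτ.le]) hp
  rw [add_sub_cancel, div_rpow hu hτ.le, le_div_iff₀ (rpow_pos_of_pos hτ p)] at hB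
  calc τ ^ p + p * τ ^ (p - 1) * (u - τ) = (1 + p * (u / τ - 1)) * τ ^ p := by
        rw [rpow_sub_one hτ.ne']; field_simp
    _ ≤ u ^ p := hB

-- The tangent-line bound for the convex function `|·|^p` at `t`, kept exact at `t = 0`:
-- that exact term is what the case `p = 1` needs.
lemma rpow_abs_sub_mul_sgn_le {p : ℝ} (hp : 1 ≤ p) (t c : ℝ) :
    |t| ^ p - p * c * (|t| ^ (p - 1) * sgn t) + (if t = 0 then |c| ^ p else 0) ≤ |t - c| ^ p := by
  rcases eq_or_ne t 0 with rfl | ht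
  · simp [sgn, zero_rpow (by linarith : p ≠ 0)]
  rw [if_neg ht, add_zero]
  have htangent := rpow_add_mul_sub_le hp (abs_pos.mpr ht) (abs_nonneg (t - c))
  have hsub : |t| - c * sgn t ≤ |t - c| := by
    have := sgn_mul_le_abs t (t - c)
    rw [mul_sub, sgn_mul_self] at this
    linarith
  have hslope : 0 ≤ p * |t| ^ (p - 1) := by positivity
  linarith [mul_le_mul_of_nonneg_left hsub hslope]

lemma sum_rpow_abs_le_sum_rpow_abs_sub {N : ℕ} {p : ℝ} (hp : 1 ≤ p) {μ : Fin N → ℝ}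
    (hμ : ∀ v, 0 ≤ μ v) (x : Fin N → ℝ) (c : ℝ)
    (h : p * c * ∑ v, μ v * |x v| ^ (p - 1) * sgn (x v)
      ≤ |c| ^ p * ∑ v ∈ univ.filter (fun v => x v = 0), μ v) :
    ∑ v, μ v * |x v| ^ p ≤ ∑ v, μ v * |x v - c| ^ p := by
  have hvertex : ∀ v, μ v * |x v| ^ p - p * c * (μ v * |x v| ^ (p - 1) * sgn (x v))
      + |c| ^ p * (if x v = 0 then μ v else 0) ≤ μ v * |x v - c| ^ p := fun v => by
    have := mul_le_mul_of_nonneg_left (rpow_abs_sub_mul_sgn_le hp (x v) c) (hμ v)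
    split_ifs at this ⊢ <;> linarith
  have := sum_le_sum fun v (_ : v ∈ univ) => hvertex v
  rw [sum_add_distrib, sum_sub_distrib, ← mul_sum, ← mul_sum, ← sum_filter] at this
  linarith

end Scalar

section LovaszExtension

variable {N : ℕ} (F : Finset (Fin N) → ℝ)

lemma measurable_apply_filter_lt (e : Finset (Fin N)) (x : Fin N → ℝ) :
    Measurable fun t : ℝ => F (e.filter fun v => t < x v) := by
  classical
  have h : Measurable fun t : ℝ => fun v : Fin N => t < x v :=
    measurable_pi_lambda _ fun v => measurableSet_setOfPred.mp measurableSet_Iio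
  convert (measurable_of_finite (fun q : Fin N → Prop => F (e.filter q))).comp h using 2
  simp only [Function.comp_apply]

lemma intervalIntegrable_apply_filter_lt (e : Finset (Fin N)) (x : Fin N → ℝ) (a b : ℝ) :
    IntervalIntegrable (fun t : ℝ => F (e.filter fun v => t < x v)) volume a b := by
  rw [intervalIntegrable_iff]
  refine Measure.integrableOn_of_bounded (M := ∑ S, |F S|) measure_Ioc_lt_top.ne
    (measurable_apply_filter_lt F e x).aestronglyMeasurable (ae_of_all _ fun t => ?_)
  exact single_le_sum (f := fun S => |F S|) (fun S _ => abs_nonneg _) (mem_univ _)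

lemma intervalIntegral_eq_of_eqOn_Ioo {f : ℝ → ℝ} {a b c : ℝ} (hab : a ≤ b)
    (h : Set.EqOn f (fun _ => c) (Set.Ioo a b)) : ∫ t in a..b, f t = (b - a) * c := by
  rw [intervalIntegral.integral_of_le hab, integral_Ioc_eq_integral_Ioo,
    setIntegral_congr_fun measurableSet_Ioo h]
  simp [hab]

lemma sum_update_le_of_submodular (hF : Submodular F) {e T : Finset (Fin N)} {u : Fin N}
    {z : Fin N → ℝ} (hz : ∀ T ⊆ e.erase u, ∑ v ∈ T, z v ≤ F T) (hT : T ⊆ e) :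
    ∑ v ∈ T, Function.update z u (F e - F (e.erase u)) v ≤ F T := by
  by_cases huT : u ∈ T
  · rw [sum_update_of_mem huT, sdiff_singleton_eq_erase]
    have hunion : T ∪ e.erase u = e := by
      rw [union_erase_of_mem huT, union_eq_right.mpr hT]
    have hinter : T ∩ e.erase u = T.erase u := by
      rw [inter_erase, inter_eq_left.mpr hT]
    have := hF T (e.erase u)
    rw [hunion, hinter] at this
    linarith [hz (T.erase u) (erase_subset_erase u hT)]
  · rw [sum_update_of_notMem huT]
    exact hz T (subset_erase.mpr ⟨hT, huT⟩)

-- Edmonds' greedy vector, built by adding the vertices of `e` in decreasing order of `x`.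
theorem exists_greedy_vector (hF : Submodular F) (hF0 : F ∅ = 0) (x : Fin N → ℝ)
    (e : Finset (Fin N)) :
    ∃ z : Fin N → ℝ, (∀ T ⊆ e, ∑ v ∈ T, z v ≤ F T) ∧ ∑ v ∈ e, z v = F e ∧
      ∀ m M : ℝ, (∀ v ∈ e, m ≤ x v) → (∀ v ∈ e, x v ≤ M) →
        ∑ v ∈ e, z v * x v = F e * m + ∫ t in m..M, F (e.filter fun v => t < x v) := by
  induction e using Finset.strongInduction with
  | H e IH =>
  rcases e.eq_empty_or_nonempty with rfl | he
  · exact ⟨0, fun T hT => by simp [subset_empty.mp hT, hF0], by simp [hF0],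
      fun m M _ _ => by simp [hF0]⟩
  obtain ⟨u, hu, hmin⟩ := e.exists_min_image x he
  obtain ⟨z, hzle, hzsum, hzval⟩ := IH (e.erase u) (erase_ssubset hu)
  refine ⟨Function.update z u (F e - F (e.erase u)),
    fun T hT => sum_update_le_of_submodular F hF hzle hT, ?_, fun m M hm hM => ?_⟩
  · rw [sum_update_of_mem hu, sdiff_singleton_eq_erase, hzsum]
    ring
  have hsplit := intervalIntegral.integral_add_adjacent_intervals
    (intervalIntegrable_apply_filter_lt F e x m (x u))
    (intervalIntegrable_apply_filter_lt F e x (x u) M)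
  have hlow : ∫ t in m..x u, F (e.filter fun v => t < x v) = (x u - m) * F e :=
    intervalIntegral_eq_of_eqOn_Ioo (hm u hu) fun t ht => by
      simp only
      rw [filter_true_of_mem fun v hv => ht.2.trans_le (hmin v hv)]
  have hhigh : ∫ t in x u..M, F (e.filter fun v => t < x v)
      = ∫ t in x u..M, F ((e.erase u).filter fun v => t < x v) := by
    refine intervalIntegral.integral_congr fun t ht => ?_
    rw [Set.uIcc_of_le (hM u hu)] at ht
    rw [filter_erase, erase_eq_of_notMem]
    simp [ht.1]
  have hrest := hzval (x u) M (fun v hv => hmin v (mem_of_mem_erase hv))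
    (fun v hv => hM v (mem_of_mem_erase hv))
  rw [← add_sum_erase e _ hu, Function.update_self,
    sum_congr rfl fun v hv => by rw [Function.update_of_ne (ne_of_mem_erase hv)],
    hrest, ← hsplit, hlow, hhigh]
  ring

theorem exists_mem_basePolytope_dotp_eq_lovasz (hF : Submodular F) (hF0 : F ∅ = 0)
    (hFuniv : F univ = 0) (x : Fin N → ℝ) : ∃ z ∈ basePolytope F, dotp z x = lovasz F x := by
  obtain ⟨z, hle, hsum, hval⟩ := exists_greedy_vector F hF hF0 x univ
  refine ⟨z, ⟨fun S => hle S (subset_univ S), hsum.trans hFuniv⟩, ?_⟩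
  rw [dotp, hval (⨅ v, x v) (⨆ v, x v) (fun v _ => ciInf_le (Finite.bddBelow_range x) v)
    (fun v _ => le_ciSup (Finite.bddAbove_range x) v), hFuniv, zero_mul, zero_add, lovasz]

lemma lovasz_nonneg (hF : ∀ S, 0 ≤ F S) (x : Fin N → ℝ) : 0 ≤ lovasz F x := by
  rcases isEmpty_or_nonempty (Fin N) with h | h
  · simp [lovasz]
  · exact intervalIntegral.integral_nonneg
      (ciInf_le_ciSup (Finite.bddBelow_range x) (Finite.bddAbove_range x)) fun t _ => hF _

lemma mul_le_lovasz (hF : ∀ S, 0 ≤ F S) {x : Fin N → ℝ} {a b c : ℝ} (ha : ⨅ v, x v ≤ a)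
    (hab : a ≤ b) (hb : b ≤ ⨆ v, x v)
    (h : ∀ t ∈ Set.Ioo a b, F (univ.filter fun v => t < x v) = c) :
    (b - a) * c ≤ lovasz F x := by
  have hI := intervalIntegrable_apply_filter_lt F univ x
  rw [lovasz, ← intervalIntegral.integral_add_adjacent_intervals (hI _ a) (hI a _),
    ← intervalIntegral.integral_add_adjacent_intervals (hI a b) (hI b _),
    intervalIntegral_eq_of_eqOn_Ioo hab h]
  have h1 : 0 ≤ ∫ t in (⨅ v, x v)..a, F (univ.filter fun v => t < x v) :=
    intervalIntegral.integral_nonneg ha fun t _ => hF _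
  have h2 : 0 ≤ ∫ t in b..(⨆ v, x v), F (univ.filter fun v => t < x v) :=
    intervalIntegral.integral_nonneg hb fun t _ => hF _
  linarith

end LovaszExtension

section EigenIdentities

variable {N : ℕ} {p lam : ℝ} {g μ x : Fin N → ℝ}

lemma pos_of_sum_mul_pos (hp : 0 < p) (hμ : ∀ v, 0 ≤ μ v)
    (heq : ∀ v, x v ≠ 0 → g v = lam * μ v * (|x v| ^ (p - 1) * sgn (x v)))
    (hpos : 0 < ∑ v, g v * x v) : 0 < lam := by
  have hpair : ∑ v, g v * x v = lam * ∑ v, μ v * |x v| ^ p := by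
    rw [mul_sum]
    refine sum_congr rfl fun v _ => ?_
    rcases eq_or_ne (x v) 0 with h | h
    · simp [h, Real.zero_rpow hp.ne']
    have hpow : |x v| ^ (p - 1) * sgn (x v) * x v = |x v| ^ p := by
      rw [mul_assoc, sgn_mul_self, ← Real.rpow_add_one (abs_ne_zero.mpr h), sub_add_cancel]
    rw [heq v h]
    linear_combination lam * μ v * hpow
  rw [hpair] at hpos
  exact pos_of_mul_pos_left hpos
    (sum_nonneg fun v _ => mul_nonneg (hμ v) (Real.rpow_nonneg (abs_nonneg _) _))

lemma mul_sum_sgn_eq_neg_sum_zeros (hg : ∑ v, g v = 0)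
    (heq : ∀ v, x v ≠ 0 → g v = lam * μ v * (|x v| ^ (p - 1) * sgn (x v))) :
    lam * ∑ v, μ v * |x v| ^ (p - 1) * sgn (x v)
      = -∑ v ∈ univ.filter (fun v => x v = 0), g v := by
  have hsupp : lam * ∑ v, μ v * |x v| ^ (p - 1) * sgn (x v)
      = ∑ v ∈ univ.filter (fun v => ¬ x v = 0), g v := by
    rw [mul_sum, sum_filter]
    refine sum_congr rfl fun v _ => ?_
    split_ifs with h
    · simp [h, sgn]
    · rw [heq v h]; ring
  rw [hsupp]
  linarith [sum_filter_add_sum_filter_not univ (fun v => x v = 0) g]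

end EigenIdentities

namespace SubmodularHypergraph

variable {N : ℕ} (G : SubmodularHypergraph N)

/-- `△_p x`, evaluated with the base-polytope points `y e` chosen in an eigenpair. -/
def pLaplacian (p : ℝ) (x : Fin N → ℝ) (y : Finset (Fin N) → Fin N → ℝ) (v : Fin N) : ℝ :=
  ∑ e ∈ G.E, G.θ e * G.fe e x ^ (p - 1) * y e v

variable {G}

lemma w_univ {e : Finset (Fin N)} (he : e ∈ G.E) : G.w e univ = 0 := by
  have hsymm := G.w_symm e he ∅ (empty_subset e)
  rw [sdiff_empty] at hsymm
  rw [G.w_inter e he, univ_inter, ← hsymm, G.w_empty e he]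

lemma fe_nonneg {e : Finset (Fin N)} (he : e ∈ G.E) (x : Fin N → ℝ) : 0 ≤ G.fe e x :=
  lovasz_nonneg _ (G.w_nonneg e he) x

lemma fe_le_dotp {e : Finset (Fin N)} (he : e ∈ G.E) {x y : Fin N → ℝ}
    (hy : ∀ z ∈ basePolytope (G.w e), dotp z x ≤ dotp y x) : G.fe e x ≤ dotp y x := by
  obtain ⟨z, hz, hzx⟩ := exists_mem_basePolytope_dotp_eq_lovasz (G.w e) (G.w_submodular e he)
    (G.w_empty e he) (w_univ he) x
  rw [fe, ← hzx]
  exact hy z hz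

lemma exists_fe_pos (hG : G.Connected) {x : Fin N → ℝ} (hx : Nonconstant x) :
    ∃ e ∈ G.E, 0 < G.fe e x := by
  obtain ⟨u, w, huw⟩ := hx
  obtain ⟨vmax, -, hmax⟩ := univ.exists_max_image x ⟨u, mem_univ u⟩
  have hbelow : (univ.filter fun v => x v < x vmax).Nonempty := by
    rw [filter_nonempty_iff]
    by_contra! h
    exact huw ((le_antisymm (hmax u (mem_univ u)) (h u (mem_univ u))).trans
      (le_antisymm (hmax w (mem_univ w)) (h w (mem_univ w))).symm)
  -- `x vsec` is the second largest value of `x`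
  obtain ⟨vsec, hvsec, hsec⟩ := exists_max_image _ x hbelow
  have hlt : x vsec < x vmax := (mem_filter.mp hvsec).2
  set S := univ.filter fun v => x vsec < x v
  have hlevel : ∀ t ∈ Set.Ioo (x vsec) (x vmax), (univ.filter fun v => t < x v) = S := by
    intro t ht
    ext v
    simp only [S, mem_filter, mem_univ, true_and]
    refine ⟨ht.1.trans, fun hv => ?_⟩
    by_contra! hvt
    exact hv.not_ge (hsec v (mem_filter.mpr ⟨mem_univ v, hvt.trans_lt ht.2⟩))
  have hvol : 0 < G.volB S := hG S ⟨vmax, by simpa [S] using hlt⟩ fun h => by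
    have : vsec ∈ S := h ▸ mem_univ vsec
    simp [S] at this
  obtain ⟨e, he, hθw⟩ := exists_lt_of_sum_lt
    (show ∑ e ∈ G.E, (0 : Finset (Fin N) → ℝ) e < ∑ e ∈ G.E, G.θ e * G.w e S by
      simpa [volB] using hvol)
  have hw : 0 < G.w e S := pos_of_mul_pos_right hθw (G.θ_pos e he).le
  refine ⟨e, he, ?_⟩
  calc 0 < (x vmax - x vsec) * G.w e S := mul_pos (sub_pos.mpr hlt) hw
    _ ≤ G.fe e x := mul_le_lovasz _ (G.w_nonneg e he) (ciInf_le (Finite.bddBelow_range x) vsec)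
        hlt.le (le_ciSup (Finite.bddAbove_range x) vmax) fun t ht => by rw [hlevel t ht]

lemma sum_pLaplacian_eq_zero {p : ℝ} {x : Fin N → ℝ} {y : Finset (Fin N) → Fin N → ℝ}
    (hy : ∀ e ∈ G.E, y e ∈ basePolytope (G.w e)) : ∑ v, G.pLaplacian p x y v = 0 := by
  simp only [pLaplacian]
  rw [sum_comm]
  exact sum_eq_zero fun e he => by rw [← mul_sum, (hy e he).2, mul_zero]

lemma sum_pLaplacian_mul_pos (hG : G.Connected) (p : ℝ) {x : Fin N → ℝ} (hx : Nonconstant x)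
    {y : Finset (Fin N) → Fin N → ℝ}
    (hy : ∀ e ∈ G.E, ∀ z ∈ basePolytope (G.w e), dotp z x ≤ dotp (y e) x) :
    0 < ∑ v, G.pLaplacian p x y v * x v := by
  have hpair : ∑ v, G.pLaplacian p x y v * x v
      = ∑ e ∈ G.E, G.θ e * G.fe e x ^ (p - 1) * dotp (y e) x := by
    simp only [pLaplacian, dotp, sum_mul, mul_sum]
    rw [sum_comm]
    simp only [mul_assoc]
  obtain ⟨e₀, he₀, hf₀⟩ := exists_fe_pos hG hx
  rw [hpair]
  refine sum_pos' (fun e he => ?_) ⟨e₀, he₀, ?_⟩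
  · exact mul_nonneg (mul_nonneg (G.θ_pos e he).le (Real.rpow_nonneg (fe_nonneg he x) _))
      ((fe_nonneg he x).trans (fe_le_dotp he (hy e he)))
  · exact mul_pos (mul_pos (G.θ_pos e₀ he₀) (Real.rpow_pos_of_pos hf₀ _))
      (hf₀.trans_le (fe_le_dotp he₀ (hy e₀ he₀)))

variable {p lam : ℝ} {x : Fin N → ℝ}

lemma IsEigenpair.exists_pLaplacian (hp : 1 ≤ p) (hx : G.IsEigenpair p lam x) :
    ∃ y : Finset (Fin N) → Fin N → ℝ,
      (∀ e ∈ G.E, y e ∈ basePolytope (G.w e) ∧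
        ∀ z ∈ basePolytope (G.w e), dotp z x ≤ dotp (y e) x) ∧
      (∀ v, x v ≠ 0 → G.pLaplacian p x y v = lam * G.μ v * (|x v| ^ (p - 1) * sgn (x v))) ∧
      (1 < p → ∀ v, G.pLaplacian p x y v = lam * G.μ v * (|x v| ^ (p - 1) * sgn (x v))) ∧
      (p = 1 → ∀ v, x v = 0 → |G.pLaplacian p x y v| ≤ lam * G.μ v) := by
  obtain ⟨-, y, hy, heq⟩ := hx
  refine ⟨y, hy, ?_⟩
  split_ifs at heq with hp1
  · exact ⟨fun v _ => heq v, fun _ => heq, fun h => absurd h hp1.ne'⟩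
  · obtain rfl : p = 1 := le_antisymm (not_lt.mp hp1) hp
    refine ⟨fun v hv => ?_, fun h => absurd h hp1, fun _ v hv => ?_⟩
    · simpa [pLaplacian] using heq.1 v hv
    · simpa [pLaplacian] using heq.2 v hv

lemma IsEigenpair.pos (hp : 1 ≤ p) (hG : G.Connected) (hx : G.IsEigenpair p lam x)
    (hnc : Nonconstant x) : 0 < lam := by
  obtain ⟨y, hy, hsupp, -⟩ := hx.exists_pLaplacian hp
  exact pos_of_sum_mul_pos (by linarith) (fun v => (G.μ_pos v).le) hsupp
    (G.sum_pLaplacian_mul_pos hG p hnc fun e he => (hy e he).2)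

lemma IsEigenpair.sum_sgn_eq_zero (hp : 1 < p) (hG : G.Connected)
    (hx : G.IsEigenpair p lam x) (hnc : Nonconstant x) :
    ∑ v, G.μ v * |x v| ^ (p - 1) * sgn (x v) = 0 := by
  obtain ⟨y, hy, hsupp, hall, -⟩ := hx.exists_pLaplacian hp.le
  have himb := mul_sum_sgn_eq_neg_sum_zeros (G.sum_pLaplacian_eq_zero fun e he => (hy e he).1)
    hsupp
  have hzeros : ∑ v ∈ univ.filter (fun v => x v = 0), G.pLaplacian p x y v = 0 :=
    sum_eq_zero fun v hv => by
      rw [hall hp v, (mem_filter.mp hv).2]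
      simp [sgn]
  rw [hzeros, neg_zero] at himb
  exact (mul_eq_zero.mp himb).resolve_left (hx.pos hp.le hG hnc).ne'

lemma IsEigenpair.abs_sum_sgn_le (hG : G.Connected) (hx : G.IsEigenpair 1 lam x)
    (hnc : Nonconstant x) :
    |∑ v, G.μ v * |x v| ^ ((1 : ℝ) - 1) * sgn (x v)|
      ≤ ∑ v ∈ univ.filter (fun v => x v = 0), G.μ v := by
  obtain ⟨y, hy, hsupp, -, hzeros⟩ := hx.exists_pLaplacian le_rfl
  have hlam := hx.pos le_rfl hG hnc
  have himb := mul_sum_sgn_eq_neg_sum_zeros (G.sum_pLaplacian_eq_zero fun e he => (hy e he).1)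
    hsupp
  refine le_of_mul_le_mul_left ?_ hlam
  rw [← abs_of_pos hlam, ← abs_mul, himb, abs_neg, abs_of_pos hlam, mul_sum]
  exact (abs_sum_le_sum_abs _ _).trans
    (sum_le_sum fun v hv => hzeros rfl v (mem_filter.mp hv).2)

end SubmodularHypergraph

/-- For a connected submodular hypergraph and any nonconstant eigenvector
`x` of `△_p`: if `p > 1` then `μ_p^+(x) − μ_p^−(x) = 0`; if `p = 1` then
`|μ₁^+(x) − μ₁^−(x)| ≤ μ⁰(x)`; consequently `c = 0` minimizes `c ↦ ‖x − c·𝟙‖_{ℓp,μ}^p`. -/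
theorem stmt8 {N : ℕ} (G : SubmodularHypergraph N) (p : ℝ) (hp : 1 ≤ p)
    (hG : G.Connected) (lam : ℝ) (x : Fin N → ℝ)
    (hx : G.IsEigenpair p lam x) (hnc : Nonconstant x) :
    (1 < p →
      (∑ v ∈ posSupp x, G.μ v * |x v| ^ (p - 1))
        - (∑ v ∈ negSupp x, G.μ v * |x v| ^ (p - 1)) = 0) ∧
    (p = 1 →
      |(∑ v ∈ posSupp x, G.μ v * |x v| ^ (p - 1))
        - ∑ v ∈ negSupp x, G.μ v * |x v| ^ (p - 1)|
        ≤ ∑ v ∈ Finset.univ.filter (fun v => x v = 0), G.μ v) ∧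
    (∀ c : ℝ, ∑ v, G.μ v * |x v| ^ p ≤ ∑ v, G.μ v * |x v - c| ^ p) := by
  rw [← sum_mul_sgn]
  refine ⟨fun hp1 => hx.sum_sgn_eq_zero hp1 hG hnc, by rintro rfl; exact hx.abs_sum_sgn_le hG hnc,
    fun c => sum_rpow_abs_le_sum_rpow_abs_sub hp (fun v => (G.μ_pos v).le) x c ?_⟩
  rcases hp.lt_or_eq with hp1 | rfl
  · rw [hx.sum_sgn_eq_zero hp1 hG hnc, mul_zero]
    exact mul_nonneg (Real.rpow_nonneg (abs_nonneg c) p) (sum_nonneg fun v _ => (G.μ_pos v).le)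
  · rw [Real.rpow_one, one_mul]
    calc c * _ ≤ |c| * |∑ v, G.μ v * |x v| ^ ((1 : ℝ) - 1) * sgn (x v)| := by
          rw [← abs_mul]; exact le_abs_self _
      _ ≤ _ := mul_le_mul_of_nonneg_left (hx.abs_sum_sgn_le hG hnc) (abs_nonneg c)
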